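/- arXiv:2404.12638 — 7 statements merged into one kernel-verified Lean document; each statement's English description precedes it below -/
import Mathlib

section
/- Let n ≥ 1 and let d be a positive integer, with coefficients a_1 = d and a_m = d(1 + Σ_{j=1}^{m-1} a_j) for m ≥ 2. Let z = (z_0, …, z_n) ∈ ℝ × [0,d]^n. Then every integer vector x ∈ ℤ × ([0,d] ∩ ℤ)^n with x ≤_L z satisfies, for every index i ∈ {0, …, n}, the inequality x_i + Σ_{j=0}^{i-1} a_{i-j}(x_j − ⌈z_j⌉) ≤ ⌊z_i⌋ (the sum being empty for i = 0). (Proposition 3: the lexicographic cutting planes are valid for all integer points lexicographically lower than z.) -/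
/-- Proposition 3 (validity of the lexicographic cutting planes): every integer
vector `x ∈ ℤ × ([0,d] ∩ ℤ)^n` that is lexicographically lower than
`z ∈ ℝ × [0,d]^n` satisfies, for every index `i ∈ {0, …, n}`, the cut
`x_i + ∑_{j=0}^{i-1} a_{i-j} (x_j − ⌈z_j⌉) ≤ ⌊z_i⌋`. -/
theorem stmt_0 (n : ℕ) (hn : 1 ≤ n) (d : ℤ) (hd : 1 ≤ d)
    (a : ℕ → ℝ) (ha1 : a 1 = (d : ℝ))
    (ham : ∀ m, 2 ≤ m → a m = (d : ℝ) * (1 + ∑ j ∈ Finset.Icc 1 (m - 1), a j))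
    (z : ℕ → ℝ) (hz : ∀ i, 1 ≤ i → i ≤ n → 0 ≤ z i ∧ z i ≤ (d : ℝ))
    (x : ℕ → ℝ) (hxint : ∀ i ≤ n, ∃ m : ℤ, x i = (m : ℝ))
    (hxbox : ∀ i, 1 ≤ i → i ≤ n → 0 ≤ x i ∧ x i ≤ (d : ℝ))
    (hlex : (∃ k ≤ n, x k < z k ∧ ∀ i < k, x i = z i) ∨ (∀ i ≤ n, x i = z i)) :
    ∀ i ≤ n,
      x i + ∑ j ∈ Finset.range i, a (i - j) * (x j - (⌈z j⌉ : ℝ)) ≤ (⌊z i⌋ : ℝ) := by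
  have hd0 : (0:ℝ) < (d:ℝ) := by exact_mod_cast hd
  have apos : ∀ m, 1 ≤ m → 0 < a m := by
    intro m
    induction m using Nat.strong_induction_on with
    | _ m ih =>
      intro hm
      rcases eq_or_lt_of_le hm with h1 | h2
      · rw [← h1, ha1]; exact hd0
      · rw [ham m h2]
        have hnn : 0 ≤ ∑ j ∈ Finset.Icc 1 (m-1), a j := by
          apply Finset.sum_nonneg
          intro j hj
          have := Finset.mem_Icc.mp hj
          exact (ih j (by omega) this.1).le
        nlinarith
  have hkey : ∀ m, 1 ≤ m → (d:ℝ) * (1 + ∑ j ∈ Finset.Icc 1 (m-1), a j) ≤ a m := by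
    intro m hm
    rcases eq_or_lt_of_le hm with h1 | h2
    · rw [← h1]; simp [ha1]
    · rw [ham m h2]
  -- helper: if x j = z j and x j is an integer then the ceil/floor of z j equal x j
  have hceil_eq : ∀ j ≤ n, x j = z j → (⌈z j⌉ : ℝ) = x j := by
    intro j hj hxz
    obtain ⟨m, hm⟩ := hxint j hj
    rw [← hxz, hm, Int.ceil_intCast]
  have hfloor_eq : ∀ j ≤ n, x j = z j → (⌊z j⌋ : ℝ) = x j := by
    intro j hj hxz
    obtain ⟨m, hm⟩ := hxint j hj
    rw [← hxz, hm, Int.floor_intCast]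
  intro i hi
  rcases hlex with ⟨k, hk, hxkz, heq⟩ | hall
  · rcases le_or_gt i k with hik | hki
    · -- i ≤ k : all sum terms vanish
      have hsz : ∑ j ∈ Finset.range i, a (i - j) * (x j - (⌈z j⌉ : ℝ)) = 0 := by
        apply Finset.sum_eq_zero
        intro j hj
        have hj' := Finset.mem_range.mp hj
        have : (⌈z j⌉ : ℝ) = x j := hceil_eq j (by omega) (heq j (by omega))
        rw [this]; ring
      rw [hsz, add_zero]
      rcases eq_or_lt_of_le hik with h1 | h2
      · -- i = k : x i < z i, integer
        obtain ⟨m, hm⟩ := hxint i hi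
        have : (m:ℝ) ≤ z i := by rw [← hm, h1]; exact hxkz.le
        have : m ≤ ⌊z i⌋ := Int.le_floor.mpr this
        rw [hm]; exact_mod_cast this
      · have hxz := heq i h2
        rw [hfloor_eq i hi hxz, hxz]
    · -- k < i
      have h1i : 1 ≤ i := by omega
      have hkn : k ≤ n := hk
      -- split the sum
      rw [Finset.range_eq_Ico, ← Finset.sum_Ico_consecutive _ (Nat.zero_le k) hki.le,
        Finset.sum_eq_sum_Ico_succ_bot hki]
      have hz1 : ∑ j ∈ Finset.Ico 0 k, a (i - j) * (x j - (⌈z j⌉ : ℝ)) = 0 := by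
        apply Finset.sum_eq_zero
        intro j hj
        have hj' := (Finset.mem_Ico.mp hj).2
        have : (⌈z j⌉ : ℝ) = x j := hceil_eq j (by omega) (heq j hj')
        rw [this]; ring
      rw [hz1, zero_add]
      -- bound on the k-term
      have hxk1 : x k - (⌈z k⌉ : ℝ) ≤ -1 := by
        obtain ⟨m, hm⟩ := hxint k hkn
        have h1 : (m:ℝ) < z k := by rw [← hm]; exact hxkz
        have h2 : m < ⌈z k⌉ := Int.lt_ceil.mpr h1
        have : (m:ℝ) + 1 ≤ (⌈z k⌉:ℝ) := by exact_mod_cast h2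
        rw [hm]; linarith
      have hterm_k : a (i - k) * (x k - (⌈z k⌉ : ℝ)) ≤ -(a (i - k)) := by
        have hpos := apos (i - k) (by omega)
        nlinarith
      -- bound on the tail sum
      have htail : ∑ j ∈ Finset.Ico (k+1) i, a (i - j) * (x j - (⌈z j⌉ : ℝ))
          ≤ ∑ j ∈ Finset.Ico (k+1) i, a (i - j) * (d:ℝ) := by
        apply Finset.sum_le_sum
        intro j hj
        have hj' := Finset.mem_Ico.mp hj
        have hj1 : 1 ≤ j := by omega
        have hjn : j ≤ n := by omega
        have hpos := apos (i - j) (by omega)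
        have hxd : x j ≤ (d:ℝ) := (hxbox j hj1 hjn).2
        have hzc : (0:ℝ) ≤ (⌈z j⌉ : ℝ) := by
          have : (0:ℤ) ≤ ⌈z j⌉ := Int.ceil_nonneg (hz j hj1 hjn).1
          exact_mod_cast this
        nlinarith
      -- reindex the tail sum
      have hre : ∑ j ∈ Finset.Ico (k+1) i, a (i - j) * (d:ℝ)
          = (d:ℝ) * ∑ m ∈ Finset.Icc 1 (i - k - 1), a m := by
        rw [Finset.mul_sum]
        apply Finset.sum_nbij' (fun j => i - j) (fun m => i - m)
        · intro j hj; simp only [Finset.mem_Ico, Finset.mem_Icc] at *; omega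
        · intro m hm; simp only [Finset.mem_Ico, Finset.mem_Icc] at *; omega
        · intro j hj; simp only [Finset.mem_Ico] at hj; omega
        · intro m hm; simp only [Finset.mem_Icc] at hm; omega
        · intro j hj; ring
      have hxi : x i ≤ (d:ℝ) := (hxbox i h1i hi).2
      have hzi : (0:ℝ) ≤ (⌊z i⌋ : ℝ) := by
        have : (0:ℤ) ≤ ⌊z i⌋ := Int.floor_nonneg.mpr (hz i h1i hi).1
        exact_mod_cast this
      have hk' := hkey (i - k) (by omega)
      have : (i - k) - 1 = i - k - 1 := rfl
      nlinarith [htail, hre]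
  · -- x = z everywhere (up to n)
    have hsz : ∑ j ∈ Finset.range i, a (i - j) * (x j - (⌈z j⌉ : ℝ)) = 0 := by
      apply Finset.sum_eq_zero
      intro j hj
      have hj' := Finset.mem_range.mp hj
      have : (⌈z j⌉ : ℝ) = x j := hceil_eq j (by omega) (hall j (by omega))
      rw [this]; ring
    rw [hsz, add_zero, hfloor_eq i hi (hall i hi), hall i hi]
end

section
/- Let n ≥ 1 and let d be a positive integer, with coefficients a_1 = d and a_m = d(1 + Σ_{j=1}^{m-1} a_j) for m ≥ 2. Let y ∈ ℤ × ([0,d] ∩ ℤ)^n and z ∈ ℝ × [0,d]^n, and suppose the index k ∈ {0, …, n} satisfies y_j = z_j for all j < k and y_k < z_k. Then for every index i with k < i ≤ n, one has y_i + Σ_{j=0}^{i-1} a_{i-j}(y_j − ⌈z_j⌉) ≤ y_i − d ≤ 0 ≤ ⌊z_i⌋. (The telescoping inequality used in the proof of Proposition 3, combining y_k − ⌈z_k⌉ ≤ −1, y_j − ⌈z_j⌉ ≤ d, and a_{i−k} = d(1 + Σ_{j=1}^{i−k−1} a_j).) -/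
/-- The telescoping inequality used in the proof of Proposition 3: if `y` is an
integer vector in the box agreeing with `z` below index `k` and `y_k < z_k`,
then for every `i` with `k < i ≤ n`,
`y_i + ∑_{j=0}^{i-1} a_{i-j}(y_j − ⌈z_j⌉) ≤ y_i − d ≤ 0 ≤ ⌊z_i⌋`. -/
theorem stmt_1 (n : ℕ) (hn : 1 ≤ n) (d : ℤ) (hd : 1 ≤ d)
    (a : ℕ → ℝ) (ha1 : a 1 = (d : ℝ))
    (ham : ∀ m, 2 ≤ m → a m = (d : ℝ) * (1 + ∑ j ∈ Finset.Icc 1 (m - 1), a j))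
    (y : ℕ → ℝ) (hyint : ∀ i ≤ n, ∃ m : ℤ, y i = (m : ℝ))
    (hybox : ∀ i, 1 ≤ i → i ≤ n → 0 ≤ y i ∧ y i ≤ (d : ℝ))
    (z : ℕ → ℝ) (hz : ∀ i, 1 ≤ i → i ≤ n → 0 ≤ z i ∧ z i ≤ (d : ℝ))
    (k : ℕ) (hk : k ≤ n) (hagree : ∀ j < k, y j = z j) (hlt : y k < z k) :
    ∀ i, k < i → i ≤ n →
      (y i + ∑ j ∈ Finset.range i, a (i - j) * (y j - (⌈z j⌉ : ℝ)) ≤ y i - (d : ℝ))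
      ∧ y i - (d : ℝ) ≤ 0 ∧ (0 : ℝ) ≤ (⌊z i⌋ : ℝ) := by
  have hdpos : (0 : ℝ) < (d : ℝ) := by exact_mod_cast hd
  have hapos : ∀ m, 1 ≤ m → (0 : ℝ) < a m := by
    intro m
    induction m using Nat.strong_induction_on with
    | _ m ih =>
      intro hm
      rcases eq_or_lt_of_le hm with h | h
      · rw [← h, ha1]; exact hdpos
      · rw [ham m h]
        have hs : (0 : ℝ) ≤ ∑ j ∈ Finset.Icc 1 (m - 1), a j := by
          apply Finset.sum_nonneg
          intro j hj
          simp only [Finset.mem_Icc] at hj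
          exact le_of_lt (ih j (by omega) hj.1)
        nlinarith
  intro i hki hin
  have hi1 : 1 ≤ i := by omega
  refine ⟨?_, ?_, ?_⟩
  · -- main inequality
    set f : ℕ → ℝ := fun j => a (i - j) * (y j - (⌈z j⌉ : ℝ)) with hf
    have hsplit : ∑ j ∈ Finset.range i, f j
        = ∑ j ∈ Finset.Ico 0 k, f j + ∑ j ∈ Finset.Ico k i, f j := by
      rw [Finset.range_eq_Ico, ← Finset.sum_Ico_consecutive _ (Nat.zero_le k) (le_of_lt hki)]
    have hzero : ∑ j ∈ Finset.Ico 0 k, f j = 0 := by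
      apply Finset.sum_eq_zero
      intro j hj
      simp only [Finset.mem_Ico] at hj
      obtain ⟨m, hm⟩ := hyint j (by omega)
      have hzj : z j = (m : ℝ) := by rw [← hagree j hj.2, hm]
      have : (⌈z j⌉ : ℝ) = (m : ℝ) := by rw [hzj, Int.ceil_intCast]
      simp [hf, this, hm]
    have hbot : ∑ j ∈ Finset.Ico k i, f j = f k + ∑ j ∈ Finset.Ico (k + 1) i, f j :=
      Finset.sum_eq_sum_Ico_succ_bot hki f
    -- bound the k-term
    have hfk : f k ≤ -a (i - k) := by
      obtain ⟨m, hm⟩ := hyint k hk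
      have hlt2 : m < ⌈z k⌉ := Int.lt_ceil.mpr (by rw [← hm]; exact hlt)
      have : y k - (⌈z k⌉ : ℝ) ≤ -1 := by
        rw [hm]
        have : (m : ℝ) + 1 ≤ (⌈z k⌉ : ℝ) := by exact_mod_cast hlt2
        linarith
      have hak := hapos (i - k) (by omega)
      calc f k = a (i - k) * (y k - (⌈z k⌉ : ℝ)) := rfl
        _ ≤ a (i - k) * (-1) := by
            exact mul_le_mul_of_nonneg_left this (le_of_lt hak)
        _ = -a (i - k) := by ring
    -- bound the tail terms
    have htail : ∑ j ∈ Finset.Ico (k + 1) i, f j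
        ≤ ∑ j ∈ Finset.Ico (k + 1) i, a (i - j) * (d : ℝ) := by
      apply Finset.sum_le_sum
      intro j hj
      simp only [Finset.mem_Ico] at hj
      have hj1 : 1 ≤ j := by omega
      have hjn : j ≤ n := by omega
      have hyj : y j ≤ (d : ℝ) := (hybox j hj1 hjn).2
      have hzj : (0 : ℝ) ≤ (⌈z j⌉ : ℝ) := by
        have := (hz j hj1 hjn).1
        exact_mod_cast Int.ceil_nonneg this
      have hak := hapos (i - j) (by omega)
      exact mul_le_mul_of_nonneg_left (by linarith) (le_of_lt hak)
    -- reindex the tail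
    have hreindex : ∑ j ∈ Finset.Ico (k + 1) i, a (i - j) * (d : ℝ)
        = ∑ m ∈ Finset.Icc 1 (i - k - 1), a m * (d : ℝ) := by
      apply Finset.sum_nbij' (i := fun j => i - j) (j := fun m => i - m)
      · intro j hj; simp only [Finset.mem_Ico] at hj; simp only [Finset.mem_Icc]; omega
      · intro m hm; simp only [Finset.mem_Icc] at hm; simp only [Finset.mem_Ico]; omega
      · intro j hj; simp only [Finset.mem_Ico] at hj; omega
      · intro m hm; simp only [Finset.mem_Icc] at hm; omega
      · intro j hj; rfl
    have hsum : ∑ j ∈ Finset.range i, f j ≤ -(d : ℝ) := by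
      rcases eq_or_lt_of_le (show k + 1 ≤ i by omega) with h | h
      · have h1 : i - k = 1 := by omega
        have h2 : Finset.Ico (k + 1) i = ∅ := by rw [← h]; simp
        rw [hsplit, hzero, hbot, h2]
        simp only [Finset.sum_empty, add_zero, zero_add]
        calc f k ≤ -a (i - k) := hfk
          _ = -(d : ℝ) := by rw [h1, ha1]
      · have h2 : 2 ≤ i - k := by omega
        have hik : a (i - k) = (d : ℝ) * (1 + ∑ j ∈ Finset.Icc 1 (i - k - 1), a j) :=
          ham (i - k) h2
        have : ∑ m ∈ Finset.Icc 1 (i - k - 1), a m * (d : ℝ)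
            = (d : ℝ) * ∑ m ∈ Finset.Icc 1 (i - k - 1), a m := by
          rw [Finset.mul_sum]; exact Finset.sum_congr rfl fun x _ => mul_comm _ _
        rw [hsplit, hzero, hbot]
        have := htail.trans_eq (hreindex.trans this)
        linarith [hfk]
    linarith
  · linarith [(hybox i hi1 hin).2]
  · exact_mod_cast Int.floor_nonneg.mpr (hz i hi1 hin).1
end

section
/- Let n ≥ 1 and d be a positive integer. Let z ∈ ℝ × [0,d]^n be a vector that is not an integer vector. Then every integer vector x ∈ ℤ × ([0,d] ∩ ℤ)^n with x ≤_L z satisfies x ≤_L α(z). (The key step in the proof of the Boundedness Lemma: rounding the lexicographic upper bound to α(z) preserves the bound for integer points in the box.) -/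
/-- Key step in the Boundedness Lemma: if `z ∈ ℝ × [0,d]^n` is not an integer
vector, with `k` its least fractional index, then every integer vector
`x ∈ ℤ × ([0,d] ∩ ℤ)^n` with `x ≤_L z` satisfies `x ≤_L α(z)`, where
`α(z)_i = ⌊z_i⌋` for `i ≤ k` and `α(z)_i = d` for `i > k`. -/
theorem stmt_2 (n : ℕ) (hn : 1 ≤ n) (d : ℤ) (hd : 1 ≤ d)
    (z : ℕ → ℝ) (hz : ∀ i, 1 ≤ i → i ≤ n → 0 ≤ z i ∧ z i ≤ (d : ℝ))
    (k : ℕ) (hk : k ≤ n) (hkfrac : ¬ ∃ m : ℤ, z k = (m : ℝ))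
    (hkmin : ∀ i < k, ∃ m : ℤ, z i = (m : ℝ))
    (x : ℕ → ℝ) (hxint : ∀ i ≤ n, ∃ m : ℤ, x i = (m : ℝ))
    (hxbox : ∀ i, 1 ≤ i → i ≤ n → 0 ≤ x i ∧ x i ≤ (d : ℝ))
    (hlex : (∃ k' ≤ n, x k' < z k' ∧ ∀ i < k', x i = z i) ∨ (∀ i ≤ n, x i = z i)) :
    (∃ k' ≤ n, x k' < (if k' ≤ k then (⌊z k'⌋ : ℝ) else (d : ℝ)) ∧
        ∀ i < k', x i = (if i ≤ k then (⌊z i⌋ : ℝ) else (d : ℝ)))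
    ∨ (∀ i ≤ n, x i = (if i ≤ k then (⌊z i⌋ : ℝ) else (d : ℝ))) := by
  classical
  have hfloor : ∀ i < k, ((⌊z i⌋ : ℤ) : ℝ) = z i := by
    intro i hi
    obtain ⟨m, hm⟩ := hkmin i hi
    rw [hm, Int.floor_intCast]
  rcases hlex with ⟨k', hk'n, hlt, heq⟩ | hall
  · by_cases hkk : k' < k
    · left
      refine ⟨k', hk'n, ?_, ?_⟩
      · rw [if_pos hkk.le, hfloor k' hkk]; exact hlt
      · intro i hi
        rw [if_pos (hi.trans hkk).le, hfloor i (hi.trans hkk)]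
        exact heq i hi
    · push_neg at hkk
      rcases lt_or_eq_of_le hkk with hkk' | hkk'
      · exfalso
        obtain ⟨m, hm⟩ := hxint k hk
        exact hkfrac ⟨m, by rw [← heq k hkk', hm]⟩
      · subst hkk'
        -- k' = k
        have hxk : x k ≤ (⌊z k⌋ : ℝ) := by
          obtain ⟨m, hm⟩ := hxint k hk
          rw [hm]
          exact_mod_cast Int.le_floor.mpr (hm ▸ hlt.le)
        have hpre : ∀ i < k, x i = (if i ≤ k then ((⌊z i⌋ : ℤ) : ℝ) else (d : ℝ)) := by
          intro i hi
          rw [if_pos hi.le, hfloor i hi]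
          exact heq i hi
        rcases lt_or_eq_of_le hxk with h2 | h2
        · left
          exact ⟨k, hk, by rw [if_pos le_rfl]; exact h2, hpre⟩
        · by_cases hex : ∃ j, k < j ∧ j ≤ n ∧ x j ≠ (d : ℝ)
          · left
            set j := Nat.find hex with hj
            obtain ⟨hj1, hj2, hj3⟩ := Nat.find_spec hex
            refine ⟨j, hj2, ?_, ?_⟩
            · rw [if_neg (not_le.mpr hj1)]
              exact lt_of_le_of_ne (hxbox j (Nat.lt_of_le_of_lt (Nat.zero_le k) hj1) hj2).2 hj3
            · intro i hi
              by_cases hik : i ≤ k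
              · rw [if_pos hik]
                rcases lt_or_eq_of_le hik with h3 | h3
                · rw [hfloor i h3]; exact heq i h3
                · subst h3; exact h2
              · rw [if_neg hik]
                push_neg at hik
                have := Nat.find_min hex hi
                push_neg at this
                exact this hik (le_of_lt (hi.trans_le hj2))
          · right
            push_neg at hex
            intro i hin
            by_cases hik : i ≤ k
            · rw [if_pos hik]
              rcases lt_or_eq_of_le hik with h3 | h3
              · rw [hfloor i h3]; exact heq i h3
              · subst h3; exact h2
            · rw [if_neg hik]
              exact hex i (not_le.mp hik) hin
  · exfalso
    obtain ⟨m, hm⟩ := hxint k hk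
    exact hkfrac ⟨m, by rw [← hall k hk, hm]⟩
end

section
/- Let n ≥ 1 and d be a positive integer, with coefficients a_1 = d and a_m = d(1 + Σ_{j=1}^{m-1} a_j) for m ≥ 2. Let z ∈ ℝ × [0,d]^n be a vector that is not an integer vector and let k = k(z) be the least index with z_k ∉ ℤ. Then every x ∈ ℝ × [0,d]^n with x ≤_L z that satisfies the cut (C)_k derived from z, i.e., x_k + Σ_{j=0}^{k-1} a_{k-j}(x_j − ⌈z_j⌉) ≤ ⌊z_k⌋, also satisfies x ≤_L α(z). -/
/-- The inclusion from the proof of the Monotonically Decreasing Lemma: if `z`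
is non-integral with least fractional index `k`, then every `x ∈ ℝ × [0,d]^n`
with `x ≤_L z` that satisfies the cut `(C)_k` derived from `z` also satisfies
`x ≤_L α(z)`. -/
theorem stmt_5 (n : ℕ) (hn : 1 ≤ n) (d : ℤ) (hd : 1 ≤ d)
    (a : ℕ → ℝ) (ha1 : a 1 = (d : ℝ))
    (ham : ∀ m, 2 ≤ m → a m = (d : ℝ) * (1 + ∑ j ∈ Finset.Icc 1 (m - 1), a j))
    (z : ℕ → ℝ) (hz : ∀ i, 1 ≤ i → i ≤ n → 0 ≤ z i ∧ z i ≤ (d : ℝ))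
    (k : ℕ) (hk : k ≤ n) (hkfrac : ¬ ∃ m : ℤ, z k = (m : ℝ))
    (hkmin : ∀ i < k, ∃ m : ℤ, z i = (m : ℝ))
    (x : ℕ → ℝ) (hxbox : ∀ i, 1 ≤ i → i ≤ n → 0 ≤ x i ∧ x i ≤ (d : ℝ))
    (hlex : (∃ k' ≤ n, x k' < z k' ∧ ∀ i < k', x i = z i) ∨ (∀ i ≤ n, x i = z i))
    (hcut : x k + ∑ j ∈ Finset.range k, a (k - j) * (x j - (⌈z j⌉ : ℝ)) ≤ (⌊z k⌋ : ℝ)) :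
    (∃ k' ≤ n, x k' < (if k' ≤ k then (⌊z k'⌋ : ℝ) else (d : ℝ)) ∧
        ∀ i < k', x i = (if i ≤ k then (⌊z i⌋ : ℝ) else (d : ℝ)))
    ∨ (∀ i ≤ n, x i = (if i ≤ k then (⌊z i⌋ : ℝ) else (d : ℝ))) := by
  classical
  have hfloor_lt : (⌊z k⌋ : ℝ) < z k := by
    rcases lt_or_eq_of_le (Int.floor_le (z k)) with h | h
    · exact h
    · exact absurd ⟨⌊z k⌋, h.symm⟩ hkfrac
  have hzint : ∀ i < k, ((⌈z i⌉ : ℝ) = z i ∧ (⌊z i⌋ : ℝ) = z i) := by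
    intro i hi
    obtain ⟨m, hm⟩ := hkmin i hi
    rw [hm]
    constructor <;> norm_num
  -- helper: if x agrees with z below k, the sum in the cut vanishes
  have hsum0 : (∀ j < k, x j = z j) →
      ∑ j ∈ Finset.range k, a (k - j) * (x j - (⌈z j⌉ : ℝ)) = 0 := by
    intro h
    apply Finset.sum_eq_zero
    intro j hj
    have hjk := Finset.mem_range.mp hj
    rw [h j hjk, (hzint j hjk).1]
    ring
  rcases hlex with ⟨k', hk'n, hxlt, hxeq⟩ | heq
  · rcases lt_trichotomy k' k with h | hkk | h
    · -- k' < k : strict drop below k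
      left
      refine ⟨k', hk'n, ?_, ?_⟩
      · rw [if_pos (le_of_lt h), (hzint k' h).2]
        exact hxlt
      · intro i hi
        have hik : i < k := lt_trans hi h
        rw [if_pos (le_of_lt hik), (hzint i hik).2]
        exact hxeq i hi
    · -- k' = k
      subst hkk
      have hsum := hsum0 hxeq
      rw [hsum, add_zero] at hcut
      rcases lt_or_eq_of_le hcut with hlt | heqk
      · -- x k' < ⌊z k'⌋
        left
        refine ⟨k', hk, ?_, ?_⟩
        · rw [if_pos le_rfl]; exact hlt
        · intro i hi
          rw [if_pos (le_of_lt hi), (hzint i hi).2]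
          exact hxeq i hi
      · -- x k' = ⌊z k'⌋
        by_cases hall : ∀ i, k' < i → i ≤ n → x i = (d : ℝ)
        · right
          intro i hin
          by_cases hik : i ≤ k'
          · rw [if_pos hik]
            rcases lt_or_eq_of_le hik with hlt | rfl
            · rw [(hzint i hlt).2]; exact hxeq i hlt
            · exact heqk
          · rw [if_neg hik]
            exact hall i (lt_of_not_ge hik) hin
        · push_neg at hall
          have hP : ∃ i, k' < i ∧ i ≤ n ∧ x i ≠ (d : ℝ) := hall
          set m0 := Nat.find hP with hm0def
          obtain ⟨hm1, hm2, hm3⟩ := Nat.find_spec hP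
          left
          refine ⟨m0, hm2, ?_, ?_⟩
          · rw [if_neg (not_le_of_gt hm1)]
            exact lt_of_le_of_ne (hxbox m0 (Nat.one_le_iff_ne_zero.mpr
              (Nat.pos_of_ne_zero (by omega)).ne') hm2).2 hm3
          · intro i hi
            by_cases hik : i ≤ k'
            · rw [if_pos hik]
              rcases lt_or_eq_of_le hik with hlt | rfl
              · rw [(hzint i hlt).2]; exact hxeq i hlt
              · exact heqk
            · rw [if_neg hik]
              have hki : k' < i := lt_of_not_ge hik
              have hin : i ≤ n := le_trans (le_of_lt hi) hm2
              have := Nat.find_min hP hi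
              push_neg at this
              exact this hki hin
    · -- k < k' : contradiction with the cut
      exfalso
      have hxk : x k = z k := hxeq k h
      have hsum := hsum0 (fun j hj => hxeq j (lt_trans hj h))
      rw [hsum, add_zero, hxk] at hcut
      exact absurd hcut (not_le_of_gt hfloor_lt)
  · -- x = z everywhere : contradiction with the cut
    exfalso
    have hsum := hsum0 (fun j hj => heq j (le_trans (le_of_lt hj) hk))
    rw [hsum, add_zero, heq k hk] at hcut
    exact absurd hcut (not_le_of_gt hfloor_lt)
end

section
/- Monotonically Decreasing Lemma: Let n ≥ 1 and d be a positive integer, with coefficients a_1 = d and a_m = d(1 + Σ_{j=1}^{m-1} a_j) for m ≥ 2. Let z, z′ ∈ ℝ × [0,d]^n both be non-integer vectors with z′ ≤_L z, and suppose z′ satisfies the cut (C)_k derived from z, where k = k(z) is the least index with z_k ∉ ℤ. Then α(z′) <_L α(z). -/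
/-- Monotonically Decreasing Lemma: if `z, z' ∈ ℝ × [0,d]^n` are non-integer
vectors with least fractional indices `k, k'` respectively, `z' ≤_L z`, and
`z'` satisfies the cut `(C)_k` derived from `z`, then `α(z') <_L α(z)`. -/
theorem stmt_6 (n : ℕ) (hn : 1 ≤ n) (d : ℤ) (hd : 1 ≤ d)
    (a : ℕ → ℝ) (ha1 : a 1 = (d : ℝ))
    (ham : ∀ m, 2 ≤ m → a m = (d : ℝ) * (1 + ∑ j ∈ Finset.Icc 1 (m - 1), a j))
    (z : ℕ → ℝ) (hz : ∀ i, 1 ≤ i → i ≤ n → 0 ≤ z i ∧ z i ≤ (d : ℝ))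
    (k : ℕ) (hk : k ≤ n) (hkfrac : ¬ ∃ m : ℤ, z k = (m : ℝ))
    (hkmin : ∀ i < k, ∃ m : ℤ, z i = (m : ℝ))
    (z' : ℕ → ℝ) (hz' : ∀ i, 1 ≤ i → i ≤ n → 0 ≤ z' i ∧ z' i ≤ (d : ℝ))
    (k' : ℕ) (hk' : k' ≤ n) (hk'frac : ¬ ∃ m : ℤ, z' k' = (m : ℝ))
    (hk'min : ∀ i < k', ∃ m : ℤ, z' i = (m : ℝ))
    (hlex : (∃ q ≤ n, z' q < z q ∧ ∀ i < q, z' i = z i) ∨ (∀ i ≤ n, z' i = z i))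
    (hcut : z' k + ∑ j ∈ Finset.range k, a (k - j) * (z' j - (⌈z j⌉ : ℝ)) ≤ (⌊z k⌋ : ℝ)) :
    ∃ m ≤ n,
      (if m ≤ k' then (⌊z' m⌋ : ℝ) else (d : ℝ)) < (if m ≤ k then (⌊z m⌋ : ℝ) else (d : ℝ))
      ∧ ∀ i < m,
        (if i ≤ k' then (⌊z' i⌋ : ℝ) else (d : ℝ)) = (if i ≤ k then (⌊z i⌋ : ℝ) else (d : ℝ)) := by
  classical
  -- z j is an integer for j < k
  have hzint : ∀ j < k, (⌈z j⌉ : ℝ) = z j ∧ (⌊z j⌋ : ℝ) = z j := by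
    intro j hj
    obtain ⟨m, hm⟩ := hkmin j hj
    rw [hm]
    simp
  have hzk_frac : (⌊z k⌋ : ℝ) < z k := by
    rcases lt_or_eq_of_le (Int.floor_le (z k)) with h | h
    · exact h
    · exact absurd ⟨⌊z k⌋, h.symm⟩ hkfrac
  have hz'k'_frac : (⌊z' k'⌋ : ℝ) < z' k' := by
    rcases lt_or_eq_of_le (Int.floor_le (z' k')) with h | h
    · exact h
    · exact absurd ⟨⌊z' k'⌋, h.symm⟩ hk'frac
  rcases hlex with ⟨q, hqn, hq, hqeq⟩ | heq
  · by_cases hqk : q < k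
    · -- Case q < k : α differs first at q
      have hk'q : q ≤ k' := by
        by_contra h
        push_neg at h
        obtain ⟨m, hm⟩ := hkmin k' (h.trans hqk)
        exact hk'frac ⟨m, by rw [hqeq k' h, hm]⟩
      refine ⟨q, hqn, ?_, ?_⟩
      · rw [if_pos hk'q, if_pos hqk.le]
        calc (⌊z' q⌋ : ℝ) ≤ z' q := Int.floor_le _
          _ < z q := hq
          _ = (⌊z q⌋ : ℝ) := ((hzint q hqk).2).symm
      · intro i hi
        rw [if_pos (hi.le.trans hk'q), if_pos (by omega : i ≤ k), hqeq i hi]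
    · push_neg at hqk
      have hlt : ∀ i < k, z' i = z i := fun i hi => hqeq i (lt_of_lt_of_le hi hqk)
      have hkk' : k ≤ k' := by
        by_contra h
        push_neg at h
        obtain ⟨m, hm⟩ := hkmin k' h
        exact hk'frac ⟨m, by rw [hlt k' h, hm]⟩
      have hsum : ∑ j ∈ Finset.range k, a (k - j) * (z' j - (⌈z j⌉ : ℝ)) = 0 := by
        apply Finset.sum_eq_zero
        intro j hj
        rw [Finset.mem_range] at hj
        rw [hlt j hj, (hzint j hj).1]
        ring
      rw [hsum, add_zero] at hcut
      -- hcut : z' k ≤ ⌊z k⌋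
      by_cases hkeq : k' = k
      · subst hkeq
        refine ⟨k', hk, ?_, ?_⟩
        · rw [if_pos le_rfl, if_pos le_rfl]
          linarith
        · intro i hi
          rw [if_pos hi.le, if_pos hi.le, hlt i hi]
      · have hkk'' : k < k' := lt_of_le_of_ne hkk' (Ne.symm hkeq)
        obtain ⟨m0, hm0⟩ := hk'min k hkk''
        have hflk' : (⌊z' k⌋ : ℝ) = z' k := by rw [hm0]; simp
        by_cases hfl : (⌊z' k⌋ : ℝ) < (⌊z k⌋ : ℝ)
        · refine ⟨k, hk, ?_, ?_⟩
          · rw [if_pos hkk', if_pos le_rfl]; exact hfl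
          · intro i hi
            rw [if_pos ((hi.trans hkk'').le), if_pos hi.le, hlt i hi]
        · have hfleq : (⌊z' k⌋ : ℝ) = (⌊z k⌋ : ℝ) :=
            le_antisymm (by rw [hflk']; exact hcut) (not_lt.1 hfl)
          -- find the least index m with k < m and ⌊z' m⌋ < d
          have hPk' : k < k' ∧ (⌊z' k'⌋ : ℝ) < (d : ℝ) := by
            refine ⟨hkk'', ?_⟩
            have h1 : 1 ≤ k' := by omega
            have := (hz' k' h1 hk').2
            linarith
          have hex : ∃ m, k < m ∧ (⌊z' m⌋ : ℝ) < (d : ℝ) := ⟨k', hPk'⟩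
          set m := Nat.find hex with hmdef
          have hmspec := Nat.find_spec hex
          have hmle : m ≤ k' := Nat.find_min' hex hPk'
          refine ⟨m, hmle.trans hk', ?_, ?_⟩
          · rw [if_pos hmle, if_neg (by omega : ¬ m ≤ k)]
            exact hmspec.2
          · intro i hi
            by_cases hik : i ≤ k
            · rw [if_pos (hik.trans hkk''.le), if_pos hik]
              rcases lt_or_eq_of_le hik with h | h
              · rw [hlt i h]
              · subst h; exact hfleq
            · push_neg at hik
              have hmin := Nat.find_min hex hi
              have hnd : ¬ (⌊z' i⌋ : ℝ) < (d : ℝ) := fun hc => hmin ⟨hik, hc⟩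
              push_neg at hnd
              have h1 : 1 ≤ i := by omega
              have hin : i ≤ n := by omega
              have hub : (⌊z' i⌋ : ℝ) ≤ (d : ℝ) := le_trans (Int.floor_le _) (hz' i h1 hin).2
              rw [if_pos (le_of_lt (lt_of_lt_of_le hi hmle)), if_neg (by omega : ¬ i ≤ k)]
              linarith
  · -- z' = z on [0, n] : contradiction with the cut
    exfalso
    have hsum : ∑ j ∈ Finset.range k, a (k - j) * (z' j - (⌈z j⌉ : ℝ)) = 0 := by
      apply Finset.sum_eq_zero
      intro j hj
      rw [Finset.mem_range] at hj
      rw [heq j (by omega), (hzint j hj).1]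
      ring
    rw [hsum, add_zero, heq k hk] at hcut
    linarith
end

section
/- Boundedness Lemma: Let n ≥ 1, let d be a positive integer, and let c ∈ ℤ^n with c_i ≥ 1 for all i. Let x ∈ ℤ^n with 0 ≤ x_i ≤ d for all i, and set x̂ = (c·x, x_1, …, x_n) ∈ ℤ^{n+1}. Then (d Σ_{i=1}^n min(0, c_i), 0, …, 0) ≤_L x̂; and if moreover z ∈ ℝ × [0,d]^n is not an integer vector and x̂ ≤_L z, then x̂ ≤_L α(z). (In the paper, x̂ is an optimal integer solution of the lexicographic optimization problem and z an optimal solution of its LP relaxation, so that x̂ ≤_L z holds.) -/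
/-- Boundedness Lemma: for `c ∈ ℤ^n` with `c_i ≥ 1`, `x ∈ ℤ^n` with
`0 ≤ x_i ≤ d`, and `x̂ = (c·x, x_1, …, x_n)`, one has
`(d ∑ min(0,c_i), 0, …, 0) ≤_L x̂`; and if `z ∈ ℝ × [0,d]^n` is non-integral
(with least fractional index `k`) and `x̂ ≤_L z`, then `x̂ ≤_L α(z)`. -/
theorem stmt_7 (n : ℕ) (hn : 1 ≤ n) (d : ℤ) (hd : 1 ≤ d)
    (c : ℕ → ℤ) (hc : ∀ i, 1 ≤ i → i ≤ n → 1 ≤ c i)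
    (x : ℕ → ℤ) (hx : ∀ i, 1 ≤ i → i ≤ n → 0 ≤ x i ∧ x i ≤ d)
    (xhat : ℕ → ℝ)
    (hxhat0 : xhat 0 = ∑ i ∈ Finset.Icc 1 n, (c i : ℝ) * (x i : ℝ))
    (hxhati : ∀ i, 1 ≤ i → i ≤ n → xhat i = (x i : ℝ))
    (b : ℕ → ℝ)
    (hb0 : b 0 = (d : ℝ) * ∑ i ∈ Finset.Icc 1 n, min 0 (c i : ℝ))
    (hbi : ∀ i, 1 ≤ i → i ≤ n → b i = 0) :
    ((∃ k ≤ n, b k < xhat k ∧ ∀ i < k, b i = xhat i) ∨ (∀ i ≤ n, b i = xhat i))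
    ∧ ∀ z : ℕ → ℝ, (∀ i, 1 ≤ i → i ≤ n → 0 ≤ z i ∧ z i ≤ (d : ℝ)) →
        ∀ k ≤ n, (¬ ∃ m : ℤ, z k = (m : ℝ)) → (∀ i < k, ∃ m : ℤ, z i = (m : ℝ)) →
        ((∃ k' ≤ n, xhat k' < z k' ∧ ∀ i < k', xhat i = z i) ∨ (∀ i ≤ n, xhat i = z i)) →
        ((∃ k' ≤ n, xhat k' < (if k' ≤ k then (⌊z k'⌋ : ℝ) else (d : ℝ)) ∧
            ∀ i < k', xhat i = (if i ≤ k then (⌊z i⌋ : ℝ) else (d : ℝ)))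
          ∨ (∀ i ≤ n, xhat i = (if i ≤ k then (⌊z i⌋ : ℝ) else (d : ℝ)))) := by
  classical
  have hxd : ∀ i, 1 ≤ i → i ≤ n → xhat i ≤ (d : ℝ) := by
    intro i h1 h2
    rw [hxhati i h1 h2]
    exact_mod_cast (hx i h1 h2).2
  have hint : ∀ i, i ≤ n → ∃ m : ℤ, xhat i = (m : ℝ) := by
    intro i hi
    rcases Nat.eq_zero_or_pos i with h0 | h1
    · subst h0
      exact ⟨∑ j ∈ Finset.Icc 1 n, c j * x j, by rw [hxhat0]; push_cast; ring⟩
    · exact ⟨x i, hxhati i h1 hi⟩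
  constructor
  · -- Part 1
    have hb0' : b 0 = 0 := by
      rw [hb0]
      have h : ∀ i ∈ Finset.Icc 1 n, min (0 : ℝ) ((c i : ℝ)) = 0 := by
        intro i hi
        simp only [Finset.mem_Icc] at hi
        have h1 := hc i hi.1 hi.2
        have h2 : (0 : ℝ) ≤ (c i : ℝ) := by exact_mod_cast le_trans zero_le_one h1
        exact min_eq_left h2
      rw [Finset.sum_congr rfl h]
      simp
    have hterm : ∀ i ∈ Finset.Icc 1 n, (0 : ℝ) ≤ (c i : ℝ) * (x i : ℝ) := by
      intro i hi
      simp only [Finset.mem_Icc] at hi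
      have h1 : (0 : ℝ) ≤ (c i : ℝ) := by
        exact_mod_cast le_trans zero_le_one (hc i hi.1 hi.2)
      have h2 : (0 : ℝ) ≤ (x i : ℝ) := by exact_mod_cast (hx i hi.1 hi.2).1
      exact mul_nonneg h1 h2
    have hx0 : 0 ≤ xhat 0 := by rw [hxhat0]; exact Finset.sum_nonneg hterm
    rcases eq_or_lt_of_le hx0 with heq | hlt
    · right
      intro i hi
      rcases Nat.eq_zero_or_pos i with h0 | h1
      · subst h0; rw [hb0', ← heq]
      · have hsum0 : ∑ j ∈ Finset.Icc 1 n, (c j : ℝ) * (x j : ℝ) = 0 := by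
          rw [← hxhat0, ← heq]
        have ht := (Finset.sum_eq_zero_iff_of_nonneg hterm).1 hsum0 i
          (Finset.mem_Icc.2 ⟨h1, hi⟩)
        have hci : (c i : ℝ) ≠ 0 := by
          have h1' := hc i h1 hi
          have : (1 : ℝ) ≤ (c i : ℝ) := by exact_mod_cast h1'
          linarith
        have hxi : (x i : ℝ) = 0 := by
          rcases mul_eq_zero.1 ht with h | h
          · exact absurd h hci
          · exact h
        rw [hbi i h1 hi, hxhati i h1 hi, hxi]
    · left
      exact ⟨0, Nat.zero_le n, by rw [hb0']; exact hlt,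
        fun i hi => absurd hi (Nat.not_lt_zero i)⟩
  · -- Part 2
    intro z hz k hk hkfrac hkint hlex
    rcases hlex with ⟨k', hk'n, hlt, heq⟩ | hall
    · rcases lt_trichotomy k' k with h | h | h
      · -- k' < k : z k' is an integer
        left
        refine ⟨k', hk'n, ?_, ?_⟩
        · rw [if_pos (le_of_lt h)]
          obtain ⟨m, hm⟩ := hkint k' h
          rw [hm, Int.floor_intCast, ← hm]
          exact hlt
        · intro i hi
          have hik : i < k := lt_trans hi h
          rw [if_pos (le_of_lt hik)]
          obtain ⟨m, hm⟩ := hkint i hik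
          rw [hm, Int.floor_intCast, ← hm]
          exact heq i hi
      · -- k' = k
        subst h
        obtain ⟨m, hm⟩ := hint k' hk'n
        have hmle : m ≤ ⌊z k'⌋ := Int.le_floor.2 (by rw [← hm]; exact le_of_lt hlt)
        have hprev : ∀ i < k', xhat i = (if i ≤ k' then ((⌊z i⌋ : ℝ)) else (d : ℝ)) := by
          intro i hi
          rw [if_pos (le_of_lt hi)]
          obtain ⟨m', hm'⟩ := hkint i hi
          rw [hm', Int.floor_intCast, ← hm']
          exact heq i hi
        rcases lt_or_eq_of_le hmle with hlt2 | heq2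
        · left
          refine ⟨k', hk'n, ?_, hprev⟩
          rw [if_pos (le_refl k'), hm]
          exact_mod_cast hlt2
        · have hk'eq : xhat k' = ((⌊z k'⌋ : ℝ)) := by rw [hm, heq2]
          by_cases hall2 : ∀ i, i ≤ n → k' < i → xhat i = (d : ℝ)
          · right
            intro i hi
            by_cases hik : i ≤ k'
            · rw [if_pos hik]
              rcases lt_or_eq_of_le hik with h | h
              · have := hprev i h; rwa [if_pos hik] at this
              · subst h; exact hk'eq
            · rw [if_neg hik]
              exact hall2 i hi (Nat.lt_of_not_le hik)
          · push_neg at hall2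
            obtain ⟨j₀, hj₀n, hj₀k, hj₀d⟩ := hall2
            have hex : ∃ j, j ≤ n ∧ k' < j ∧ xhat j ≠ (d : ℝ) := ⟨j₀, hj₀n, hj₀k, hj₀d⟩
            obtain ⟨hjn, hjk, hjd⟩ := Nat.find_spec hex
            left
            refine ⟨Nat.find hex, hjn, ?_, ?_⟩
            · rw [if_neg (by omega : ¬ Nat.find hex ≤ k')]
              have h1j : 1 ≤ Nat.find hex := by omega
              exact lt_of_le_of_ne (hxd _ h1j hjn) hjd
            · intro i hi
              by_cases hik : i ≤ k'
              · rw [if_pos hik]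
                rcases lt_or_eq_of_le hik with h | h
                · have := hprev i h; rwa [if_pos hik] at this
                · subst h; exact hk'eq
              · rw [if_neg hik]
                have hmin : ¬ (i ≤ n ∧ k' < i ∧ xhat i ≠ (d : ℝ)) := Nat.find_min hex hi
                push_neg at hmin
                exact hmin (by omega) (by omega)
      · -- k < k' : contradiction, xhat k = z k but z k not integral
        exfalso
        obtain ⟨m, hm⟩ := hint k hk
        exact hkfrac ⟨m, by rw [← heq k h, hm]⟩
    · exfalso
      obtain ⟨m, hm⟩ := hint k hk
      exact hkfrac ⟨m, by rw [← hall k hk, hm]⟩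
end

section
/- Theorem 1 (finite termination of the lexicographic cutting plane algorithm with HEM selecting cuts, abstract form): Let n ≥ 1 and d ≥ 1 be integers, with coefficients a_1 = d and a_m = d(1 + Σ_{j=1}^{m-1} a_j) for m ≥ 2, and let B ≥ 0 be an integer. Suppose z_0, z_1, …, z_T is a finite sequence of vectors in ℝ × [0,d]^n such that for every t ≤ T: (i) z_t is not an integer vector; (ii) 0 ≤ (z_t)_0 ≤ B; and for every t < T: (iii) z_{t+1} ≤_L z_t; and (iv) z_{t+1} satisfies the cut (C)_{k_t} derived from z_t, where k_t is the least index with (z_t)_{k_t} ∉ ℤ. Then T + 1 ≤ (B + 1)(d + 1)^n. In particular, no infinite sequence (z_t)_{t ∈ ℕ} satisfying (i)–(iv) for all t exists, so the cutting plane algorithm that at each iteration adds the cut at the least fractional index of the current lexicographic LP optimum (Assumption 1) reaches an integral vector in a finite number of iterations; for the integer linear program with objective c ∈ ℤ^n_+ one may take B = d Σ_i c_i, giving the iteration bound O(d^{n+1} C) with C = 1 + Σ_i |c_i|. -/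
namespace Stmt9Aux

noncomputable def Fv (d : ℤ) (w : ℕ → ℝ) (K : ℕ) (i : ℕ) : ℤ :=
  if i ≤ K then ⌊w i⌋ else d

lemma floor_lt_of_not_int {x : ℝ} (h : ¬ ∃ m : ℤ, x = m) : ((⌊x⌋ : ℤ) : ℝ) < x := by
  rcases lt_or_eq_of_le (Int.floor_le x) with h' | h'
  · exact h'
  · exact absurd ⟨⌊x⌋, h'.symm⟩ h

lemma sum_pow (d : ℤ) (n r : ℕ) (h : r ≤ n) :
    ∑ i ∈ Finset.Ico (r+1) (n+1), (d+1)^(n-i) * d = (d+1)^(n-r) - 1 := by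
  rw [Finset.sum_Ico_eq_sum_range]
  have hN : n + 1 - (r + 1) = n - r := by omega
  rw [hN]
  rw [Finset.sum_congr rfl (fun j hj => by
    have : n - (r+1+j) = n - r - 1 - j := by omega
    rw [this])]
  rw [Finset.sum_range_reflect (fun j => (d+1)^j * d) (n-r)]
  rw [← Finset.sum_mul]
  have := geom_sum_mul (d+1) (n-r)
  simpa using this

lemma psi_decrease (n : ℕ) (d : ℤ) (hd : 1 ≤ d) (F F' : ℕ → ℤ)
    (hFb : ∀ j, 1 ≤ j → j ≤ n → 0 ≤ F j ∧ F j ≤ d)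
    (hF'b : ∀ j, 1 ≤ j → j ≤ n → 0 ≤ F' j ∧ F' j ≤ d)
    (r : ℕ) (hr : r ≤ n) (hlt : F' r < F r) (hle : ∀ j < r, F' j ≤ F j) :
    (∑ i ∈ Finset.range (n+1), F' i * (d+1)^(n-i)) + 1
      ≤ ∑ i ∈ Finset.range (n+1), F i * (d+1)^(n-i) := by
  have hdpos : (0:ℤ) ≤ d + 1 := by omega
  have key : (1:ℤ) ≤ ∑ i ∈ Finset.range (n+1), (F i - F' i) * (d+1)^(n-i) := by
    have hsplit : ∑ i ∈ Finset.range (n+1), (F i - F' i) * (d+1)^(n-i)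
        = (∑ i ∈ Finset.range (r+1), (F i - F' i) * (d+1)^(n-i))
          + ∑ i ∈ Finset.Ico (r+1) (n+1), (F i - F' i) * (d+1)^(n-i) := by
      simp only [Finset.range_eq_Ico]
      exact (Finset.sum_Ico_consecutive _ (Nat.zero_le _) (by omega)).symm
    have h1 : (d+1)^(n-r) ≤ ∑ i ∈ Finset.range (r+1), (F i - F' i) * (d+1)^(n-i) := by
      rw [Finset.sum_range_succ]
      have hterm : (d+1)^(n-r) ≤ (F r - F' r) * (d+1)^(n-r) :=
        le_mul_of_one_le_left (pow_nonneg hdpos _) (by omega)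
      have hnn : 0 ≤ ∑ i ∈ Finset.range r, (F i - F' i) * (d+1)^(n-i) :=
        Finset.sum_nonneg (fun i hi =>
          mul_nonneg (by have := hle i (Finset.mem_range.mp hi); omega) (pow_nonneg hdpos _))
      linarith
    have h2 : -((d+1)^(n-r) - 1)
        ≤ ∑ i ∈ Finset.Ico (r+1) (n+1), (F i - F' i) * (d+1)^(n-i) := by
      have hterm : ∀ i ∈ Finset.Ico (r+1) (n+1),
          -((d+1)^(n-i) * d) ≤ (F i - F' i) * (d+1)^(n-i) := by
        intro i hi
        rw [Finset.mem_Ico] at hi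
        have hFi := hFb i (by omega) (by omega)
        have hF'i := hF'b i (by omega) (by omega)
        have : (-d) * (d+1)^(n-i) ≤ (F i - F' i) * (d+1)^(n-i) :=
          mul_le_mul_of_nonneg_right (by omega) (pow_nonneg hdpos _)
        linarith
      have := Finset.sum_le_sum hterm
      rw [Finset.sum_neg_distrib, sum_pow d n r hr] at this
      linarith [this]
    linarith
  have : ∑ i ∈ Finset.range (n+1), (F i - F' i) * (d+1)^(n-i)
      = (∑ i ∈ Finset.range (n+1), F i * (d+1)^(n-i))
        - ∑ i ∈ Finset.range (n+1), F' i * (d+1)^(n-i) := by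
    rw [← Finset.sum_sub_distrib]
    exact Finset.sum_congr rfl (fun i _ => by ring)
  linarith [key, this.le]

lemma step (n : ℕ) (d : ℤ) (a : ℕ → ℝ) (w w' : ℕ → ℝ) (K K' : ℕ)
    (hw'box : ∀ i, 1 ≤ i → i ≤ n → 0 ≤ w' i ∧ w' i ≤ (d:ℝ))
    (hK : K ≤ n) (hKfrac : ¬ ∃ m : ℤ, w K = (m:ℝ)) (hKint : ∀ i < K, ∃ m : ℤ, w i = (m:ℝ))
    (hK' : K' ≤ n) (hK'frac : ¬ ∃ m : ℤ, w' K' = (m:ℝ))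
    (hlex : (∃ q ≤ n, w' q < w q ∧ ∀ i < q, w' i = w i) ∨ (∀ i ≤ n, w' i = w i))
    (hcut : w' K + ∑ j ∈ Finset.range K, a (K - j) * (w' j - (⌈w j⌉:ℝ)) ≤ (⌊w K⌋:ℝ)) :
    ∃ r ≤ n, Fv d w' K' r < Fv d w K r ∧ ∀ j < r, Fv d w' K' j ≤ Fv d w K j := by
  have helper : ¬ (∀ j ≤ K, w' j = w j) := by
    intro hall
    have hsum0 : ∑ j ∈ Finset.range K, a (K - j) * (w' j - (⌈w j⌉:ℝ)) = 0 := by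
      apply Finset.sum_eq_zero
      intro j hj
      have hjK := Finset.mem_range.mp hj
      obtain ⟨m, hm⟩ := hKint j hjK
      have hc : (⌈w j⌉ : ℝ) = (m : ℝ) := by rw [hm]; exact_mod_cast Int.ceil_intCast m
      rw [hall j hjK.le, hc, hm]
      ring
    rw [hsum0, add_zero, hall K le_rfl] at hcut
    exact absurd hcut (not_le.mpr (floor_lt_of_not_int hKfrac))
  rcases hlex with ⟨q, hqn, hqlt, hqeq⟩ | hall
  · have hqK : q ≤ K := by
      by_contra h
      exact helper (fun j hj => hqeq j (by omega))
    have hqK' : q ≤ K' := by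
      by_contra h
      push_neg at h
      obtain ⟨m, hm⟩ := hKint K' (lt_of_lt_of_le h hqK)
      exact hK'frac ⟨m, by rw [hqeq K' h]; exact hm⟩
    have heqbelow : ∀ j < q, Fv d w' K' j = Fv d w K j := by
      intro j hj
      unfold Fv
      rw [if_pos (by omega : j ≤ K'), if_pos (by omega : j ≤ K), hqeq j hj]
    rcases lt_or_eq_of_le hqK with hqltK | hqeqK
    · refine ⟨q, hqn, ?_, fun j hj => (heqbelow j hj).le⟩
      obtain ⟨m, hm⟩ := hKint q hqltK
      unfold Fv
      rw [if_pos hqK', if_pos hqK]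
      have h1 : ⌊w q⌋ = m := by rw [hm]; exact Int.floor_intCast m
      have h2 : (⌊w' q⌋ : ℝ) < (m : ℝ) := lt_of_le_of_lt (Int.floor_le _) (by rw [← hm]; exact hqlt)
      rw [h1]; exact_mod_cast h2
    · subst hqeqK
      have hsum0 : ∑ j ∈ Finset.range q, a (q - j) * (w' j - (⌈w j⌉:ℝ)) = 0 := by
        apply Finset.sum_eq_zero
        intro j hj
        have hjq := Finset.mem_range.mp hj
        obtain ⟨m, hm⟩ := hKint j hjq
        have hc : (⌈w j⌉ : ℝ) = (m : ℝ) := by rw [hm]; exact_mod_cast Int.ceil_intCast m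
        rw [hqeq j hjq, hc, hm]
        ring
      rw [hsum0, add_zero] at hcut
      by_cases hfloor : ⌊w' q⌋ < ⌊w q⌋
      · refine ⟨q, hqn, ?_, fun j hj => (heqbelow j hj).le⟩
        unfold Fv
        rw [if_pos hqK', if_pos le_rfl]
        exact hfloor
      · push_neg at hfloor
        have hwq' : w' q = (⌊w' q⌋ : ℝ) := by
          have h1 : (⌊w q⌋ : ℝ) ≤ (⌊w' q⌋ : ℝ) := by exact_mod_cast hfloor
          have h2 : (⌊w' q⌋ : ℝ) ≤ w' q := Int.floor_le _
          linarith
        have hqK'lt : q < K' := by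
          rcases lt_or_eq_of_le hqK' with h | h
          · exact h
          · exact absurd ⟨⌊w' q⌋, by rw [← h]; exact hwq'⟩ hK'frac
        have hfq : ⌊w' q⌋ = ⌊w q⌋ := by
          apply le_antisymm _ hfloor
          have : (⌊w' q⌋ : ℝ) ≤ (⌊w q⌋ : ℝ) := by rw [← hwq']; exact hcut
          exact_mod_cast this
        refine ⟨K', hK', ?_, ?_⟩
        · unfold Fv
          rw [if_pos le_rfl, if_neg (by omega : ¬ K' ≤ q)]
          have hub := (hw'box K' (by omega) hK').2
          have : (⌊w' K'⌋ : ℝ) < (d : ℝ) :=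
            lt_of_lt_of_le (floor_lt_of_not_int hK'frac) hub
          exact_mod_cast this
        · intro j hj
          rcases lt_trichotomy j q with h | h | h
          · exact (heqbelow j h).le
          · subst h
            unfold Fv
            rw [if_pos hqK', if_pos le_rfl, hfq]
          · unfold Fv
            rw [if_pos hj.le, if_neg (by omega : ¬ j ≤ q)]
            have hub := (hw'box j (by omega) (by omega)).2
            have := Int.floor_le_floor hub
            simpa using this
  · exact absurd (fun j hj => hall j (le_trans hj hK)) helper

end Stmt9Aux

/-- Theorem 1 (finite termination of the lexicographic cutting plane algorithm
with HEM selecting cuts, abstract form): any finite sequence `z_0, …, z_T` of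
non-integral vectors in `ℝ × [0,d]^n` with `0 ≤ (z_t)_0 ≤ B`, `z_{t+1} ≤_L z_t`,
and `z_{t+1}` satisfying the cut `(C)_{k_t}` derived from `z_t` at the least
fractional index `k_t` of `z_t`, has length `T + 1 ≤ (B + 1)(d + 1)^n`; in
particular, no infinite such sequence exists. -/
theorem stmt_9 (n : ℕ) (hn : 1 ≤ n) (d : ℤ) (hd : 1 ≤ d)
    (a : ℕ → ℝ) (ha1 : a 1 = (d : ℝ))
    (ham : ∀ m, 2 ≤ m → a m = (d : ℝ) * (1 + ∑ j ∈ Finset.Icc 1 (m - 1), a j))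
    (B : ℤ) (hB : 0 ≤ B) :
    (∀ (T : ℕ) (z : ℕ → ℕ → ℝ) (k : ℕ → ℕ),
      (∀ t ≤ T, ∀ i, 1 ≤ i → i ≤ n → 0 ≤ z t i ∧ z t i ≤ (d : ℝ)) →
      (∀ t ≤ T, k t ≤ n ∧ (¬ ∃ m : ℤ, z t (k t) = (m : ℝ)) ∧
        ∀ i < k t, ∃ m : ℤ, z t i = (m : ℝ)) →
      (∀ t ≤ T, 0 ≤ z t 0 ∧ z t 0 ≤ (B : ℝ)) →
      (∀ t < T, (∃ q ≤ n, z (t + 1) q < z t q ∧ ∀ i < q, z (t + 1) i = z t i)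
        ∨ (∀ i ≤ n, z (t + 1) i = z t i)) →
      (∀ t < T, z (t + 1) (k t) +
          ∑ j ∈ Finset.range (k t), a (k t - j) * (z (t + 1) j - (⌈z t j⌉ : ℝ))
          ≤ (⌊z t (k t)⌋ : ℝ)) →
      ((T : ℤ) + 1 ≤ (B + 1) * (d + 1) ^ n))
    ∧ ¬ ∃ (z : ℕ → ℕ → ℝ) (k : ℕ → ℕ),
        (∀ t, ∀ i, 1 ≤ i → i ≤ n → 0 ≤ z t i ∧ z t i ≤ (d : ℝ)) ∧
        (∀ t, k t ≤ n ∧ (¬ ∃ m : ℤ, z t (k t) = (m : ℝ)) ∧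
          ∀ i < k t, ∃ m : ℤ, z t i = (m : ℝ)) ∧
        (∀ t, 0 ≤ z t 0 ∧ z t 0 ≤ (B : ℝ)) ∧
        (∀ t, (∃ q ≤ n, z (t + 1) q < z t q ∧ ∀ i < q, z (t + 1) i = z t i)
          ∨ (∀ i ≤ n, z (t + 1) i = z t i)) ∧
        (∀ t, z (t + 1) (k t) +
            ∑ j ∈ Finset.range (k t), a (k t - j) * (z (t + 1) j - (⌈z t j⌉ : ℝ))
            ≤ (⌊z t (k t)⌋ : ℝ)) := by
  have hmain : ∀ (T : ℕ) (z : ℕ → ℕ → ℝ) (k : ℕ → ℕ),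
      (∀ t ≤ T, ∀ i, 1 ≤ i → i ≤ n → 0 ≤ z t i ∧ z t i ≤ (d : ℝ)) →
      (∀ t ≤ T, k t ≤ n ∧ (¬ ∃ m : ℤ, z t (k t) = (m : ℝ)) ∧
        ∀ i < k t, ∃ m : ℤ, z t i = (m : ℝ)) →
      (∀ t ≤ T, 0 ≤ z t 0 ∧ z t 0 ≤ (B : ℝ)) →
      (∀ t < T, (∃ q ≤ n, z (t + 1) q < z t q ∧ ∀ i < q, z (t + 1) i = z t i)
        ∨ (∀ i ≤ n, z (t + 1) i = z t i)) →
      (∀ t < T, z (t + 1) (k t) +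
          ∑ j ∈ Finset.range (k t), a (k t - j) * (z (t + 1) j - (⌈z t j⌉ : ℝ))
          ≤ (⌊z t (k t)⌋ : ℝ)) →
      ((T : ℤ) + 1 ≤ (B + 1) * (d + 1) ^ n) := by
    intro T z k hbox hk h0 hlex hcut
    set F : ℕ → ℕ → ℤ := fun t i => Stmt9Aux.Fv d (z t) (k t) i with hFdef
    set Ψ : ℕ → ℤ := fun t => ∑ i ∈ Finset.range (n+1), F t i * (d+1)^(n-i) with hΨdef
    have hFbound : ∀ t ≤ T, ∀ j, 1 ≤ j → j ≤ n → 0 ≤ F t j ∧ F t j ≤ d := by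
      intro t ht j h1 h2
      obtain ⟨hz0, hzd⟩ := hbox t ht j h1 h2
      simp only [hFdef, Stmt9Aux.Fv]
      split
      · refine ⟨Int.le_floor.mpr (by exact_mod_cast hz0), ?_⟩
        have := Int.floor_le_floor hzd
        simpa using this
      · exact ⟨by omega, le_rfl⟩
    have hF0 : ∀ t ≤ T, 0 ≤ F t 0 ∧ F t 0 ≤ B := by
      intro t ht
      obtain ⟨hz0, hzB⟩ := h0 t ht
      simp only [hFdef, Stmt9Aux.Fv, if_pos (Nat.zero_le (k t))]
      refine ⟨Int.le_floor.mpr (by exact_mod_cast hz0), ?_⟩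
      have := Int.floor_le_floor hzB
      simpa using this
    have hstep : ∀ t, t < T → Ψ (t+1) + 1 ≤ Ψ t := by
      intro t ht
      have ht' : t + 1 ≤ T := ht
      obtain ⟨hKn, hKfrac, hKint⟩ := hk t ht.le
      obtain ⟨hK'n, hK'frac, _⟩ := hk (t+1) ht'
      obtain ⟨r, hrn, hrlt, hrle⟩ := Stmt9Aux.step n d a (z t) (z (t+1)) (k t) (k (t+1))
        (hbox (t+1) ht') hKn hKfrac hKint hK'n hK'frac (hlex t ht) (hcut t ht)
      exact Stmt9Aux.psi_decrease n d hd (F t) (F (t+1)) (hFbound t ht.le)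
        (hFbound (t+1) ht') r hrn hrlt hrle
    have htel : ∀ t ≤ T, Ψ t + (t : ℤ) ≤ Ψ 0 := by
      intro t
      induction t with
      | zero => intro _; simp
      | succ s ih =>
        intro h
        have h1 := ih (by omega)
        have h2 := hstep s (by omega)
        push_cast
        linarith
    have hT0 : 0 ≤ Ψ T := by
      apply Finset.sum_nonneg
      intro i hi
      have hi' := Finset.mem_range.mp hi
      apply mul_nonneg _ (pow_nonneg (by omega) _)
      rcases Nat.eq_zero_or_pos i with h | h
      · subst h; exact (hF0 T le_rfl).1
      · exact (hFbound T le_rfl i h (by omega)).1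
    have hΨ0 : Ψ 0 ≤ (B + 1) * (d + 1) ^ n - 1 := by
      have hsplit : Ψ 0 = F 0 0 * (d+1)^n +
          ∑ i ∈ Finset.Ico 1 (n+1), F 0 i * (d+1)^(n-i) := by
        simp only [hΨdef]
        rw [Finset.range_eq_Ico, ← Finset.sum_Ico_consecutive _ (Nat.zero_le 1) (by omega)]
        simp [Finset.sum_Ico_eq_sum_range]
      have h1 : F 0 0 * (d+1)^n ≤ B * (d+1)^n :=
        mul_le_mul_of_nonneg_right (hF0 0 (Nat.zero_le _)).2 (pow_nonneg (by omega) _)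
      have h2 : ∑ i ∈ Finset.Ico 1 (n+1), F 0 i * (d+1)^(n-i)
          ≤ ∑ i ∈ Finset.Ico 1 (n+1), (d+1)^(n-i) * d := by
        apply Finset.sum_le_sum
        intro i hi
        rw [Finset.mem_Ico] at hi
        have := (hFbound 0 (Nat.zero_le _) i hi.1 (by omega)).2
        have hp : (0:ℤ) ≤ (d+1)^(n-i) := pow_nonneg (by omega) _
        calc F 0 i * (d+1)^(n-i) ≤ d * (d+1)^(n-i) := mul_le_mul_of_nonneg_right this hp
          _ = (d+1)^(n-i) * d := mul_comm _ _
      have h3 : ∑ i ∈ Finset.Ico (0+1) (n+1), (d+1)^(n-i) * d = (d+1)^(n-0) - 1 :=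
        Stmt9Aux.sum_pow d n 0 (Nat.zero_le n)
      simp only [Nat.zero_add, Nat.sub_zero] at h3
      rw [hsplit]
      calc F 0 0 * (d+1)^n + ∑ i ∈ Finset.Ico 1 (n+1), F 0 i * (d+1)^(n-i)
          ≤ B * (d+1)^n + ((d+1)^n - 1) := by rw [← h3]; exact add_le_add h1 h2
        _ = (B + 1) * (d + 1) ^ n - 1 := by ring
    have := htel T le_rfl
    linarith
  refine ⟨hmain, ?_⟩
  rintro ⟨z, k, h1, h2, h3, h4, h5⟩
  have hpos : 0 ≤ (B + 1) * (d + 1) ^ n := by positivity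
  set M : ℕ := ((B + 1) * (d + 1) ^ n).toNat with hM
  have hMcast : (M : ℤ) = (B + 1) * (d + 1) ^ n := Int.toNat_of_nonneg hpos
  have := hmain M z k (fun t _ => h1 t) (fun t _ => h2 t) (fun t _ => h3 t)
    (fun t _ => h4 t) (fun t _ => h5 t)
  omega
end
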